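/- There exists L₀ = L₀(β, c, ψ) > 0 (independent of k) such that for all L ≥ L₀ the following holds. Let k ∈ ℕ, assume f = f_{L,a} satisfies (H3)_{c,k}, and let 0 < ε < L^{−max{k−1, 1/2} − β}. Then: (i) f^i(x̂) ∈ G for every x̂ ∈ C'_ψ and every 1 ≤ i ≤ k; (ii) for every ω ∈ Ω, every 1 ≤ l ≤ k and every x ∈ B^l_{ω₀}, one has f^i_ω(x) ∈ G for all 1 ≤ i ≤ l, and |(f^l_{θω})'(f_{ω₀}(x))| ≥ L^{l(1−β)}, where θω := (ω₁, ω₂, …); (iii) if moreover 1 ≤ l < k, then |f_{ω₀}'(x)| ≥ L^{1−(l+1)/2−β}, and hence |(f^{l+1}_ω)'(x)| ≥ L^{(l+1)(1/2−β)}. -/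

import Mathlib

open MeasureTheory Set Filter Topology

noncomputable section

/-! ## Basic circle setup.
We parametrize `S¹ = ℝ/ℤ` by `[0,1)`.  Functions and subsets of `S¹` are represented by
1-periodic functions/subsets of `ℝ`. -/

/-- The circle distance on `ℝ/ℤ`, computed on representatives. -/
def dS1 (x y : ℝ) : ℝ := |x - y - (round (x - y) : ℝ)|

/-- Circle distance from a point to a set (a subset of `ℝ`, viewed 1-periodically). -/
def dS1Set (x : ℝ) (A : Set ℝ) : ℝ := sInf (dS1 x '' A)

/-- The critical set `C'_ψ = {ψ' = 0}` as a subset of `ℝ`. -/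
def Crit (ψ : ℝ → ℝ) : Set ℝ := {x : ℝ | deriv ψ x = 0}

/-- (H1): the critical set is finite (as a subset of `S¹ ≅ [0,1)`). -/
def H1 (ψ : ℝ → ℝ) : Prop := (Crit ψ ∩ Ico (0:ℝ) 1).Finite

/-- (H2): no degenerate critical points. -/
def H2 (ψ : ℝ → ℝ) : Prop := ∀ x ∈ Crit ψ, deriv (deriv ψ) x ≠ 0

/-- (H4): `‖ψ'‖_{C⁰} ≤ 1/10` and `‖ψ''‖_{C⁰} ≤ 1/10`. -/
def H4 (ψ : ℝ → ℝ) : Prop :=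
  (∀ x : ℝ, |deriv ψ x| ≤ 1 / 10) ∧ ∀ x : ℝ, |deriv (deriv ψ) x| ≤ 1 / 10

/-- Standing assumptions on `ψ`: 1-periodicity, `C²` smoothness, (H1), (H2). -/
def PsiReg (ψ : ℝ → ℝ) : Prop :=
  Function.Periodic ψ 1 ∧ ContDiff ℝ 2 ψ ∧ H1 ψ ∧ H2 ψ

/-- The constant `K₁ = K₁(ψ)` with `|ψ'(x)| ≥ K₁ d(x, C'_ψ)`. -/
def K1hyp (ψ : ℝ → ℝ) (K₁ : ℝ) : Prop :=
  0 < K₁ ∧ ∀ x : ℝ, K₁ * dS1Set x (Crit ψ) ≤ |deriv ψ x|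

/-- `‖ψ''‖_{C⁰}`. -/
def psiC2norm (ψ : ℝ → ℝ) : ℝ := ⨆ x : ℝ, |deriv (deriv ψ) x|

/-- The circle map `f = f_{L,a} = Lψ + a (mod 1)`, on representatives in `[0,1)`. -/
def cmap (ψ : ℝ → ℝ) (L a x : ℝ) : ℝ := Int.fract (L * ψ x + a)

/-- The random orbit `X_{n+1} = f_{ω_n}(X_n) = f(X_n + ω_n)` on `S¹ ≅ [0,1)`;
`orbitW ψ L a ω x n = fⁿ_ω(x)`. -/
def orbitW (ψ : ℝ → ℝ) (L a : ℝ) (ω : ℕ → ℝ) (x : ℝ) : ℕ → ℝ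
  | 0 => x
  | n + 1 => cmap ψ L a (orbitW ψ L a ω x n + ω n)

/-- Deterministic iterates `fⁿ(x)`. -/
def detIter (ψ : ℝ → ℝ) (L a x : ℝ) (n : ℕ) : ℝ := orbitW ψ L a (fun _ => 0) x n

/-- Condition `(H3)_{c,k}`: `d(fˡ(x̂), C'_ψ) ≥ c` for all `x̂ ∈ C'_ψ` and `1 ≤ l ≤ k`. -/
def H3cond (ψ : ℝ → ℝ) (L a c : ℝ) (k : ℕ) : Prop :=
  ∀ x ∈ Crit ψ, ∀ l : ℕ, 1 ≤ l → l ≤ k → c ≤ dS1Set (detIter ψ L a x l) (Crit ψ)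

/-- The lifted random orbit `X̃_{n+1} = f̃(X̃_n + ω_n) = Lψ(X̃_n + ω_n) + a` on `ℝ`;
`liftOrbit ψ L a ω x n = f̃ⁿ_ω(x)`. -/
def liftOrbit (ψ : ℝ → ℝ) (L a : ℝ) (ω : ℕ → ℝ) (x : ℝ) : ℕ → ℝ
  | 0 => x
  | n + 1 => L * ψ (liftOrbit ψ L a ω x n + ω n) + a

/-- `|(fⁿ_ω)'(x)|`, computed by the chain rule (the mod-1 projection has derivative 1). -/
def derivAbs (ψ : ℝ → ℝ) (L a : ℝ) (ω : ℕ → ℝ) (x : ℝ) (n : ℕ) : ℝ :=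
  ∏ i ∈ Finset.range n, |L * deriv ψ (orbitW ψ L a ω x i + ω i)|

/-- `log |(fⁿ_ω)'(x)|`. -/
def logDerivSum (ψ : ℝ → ℝ) (L a : ℝ) (ω : ℕ → ℝ) (x : ℝ) (n : ℕ) : ℝ :=
  ∑ i ∈ Finset.range n, Real.log |L * deriv ψ (orbitW ψ L a ω x i + ω i)|

/-- `log |(f̃ⁿ_ω)'(x)|` along the lifted orbit. -/
def logDerivSumLift (ψ : ℝ → ℝ) (L a : ℝ) (ω : ℕ → ℝ) (x : ℝ) (n : ℕ) : ℝ :=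
  ∑ i ∈ Finset.range n, Real.log |L * deriv ψ (liftOrbit ψ L a ω x i + ω i)|

/-- The (signed) derivative `(f̃ⁿ_ω)'(x)` of the lifted composition. -/
def derivLift (ψ : ℝ → ℝ) (L a : ℝ) (ω : ℕ → ℝ) (x : ℝ) (n : ℕ) : ℝ :=
  ∏ i ∈ Finset.range n, (L * deriv ψ (liftOrbit ψ L a ω x i + ω i))

/-- The uniform distribution `ν^ε` on `[-ε, ε]`. -/
def unif (ε : ℝ) : Measure ℝ :=
  ENNReal.ofReal (1 / (2 * ε)) • volume.restrict (Icc (-ε) ε)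

/-- `P = ν^{⊗ ℕ}`: the coordinates of `ω` are i.i.d. with law `ν` under `P`. -/
def IsProductOf (P : Measure (ℕ → ℝ)) (ν : Measure ℝ) : Prop :=
  IsProbabilityMeasure P ∧
    ∀ (s : Finset ℕ) (A : ℕ → Set ℝ), (∀ i, MeasurableSet (A i)) →
      P {ω : ℕ → ℝ | ∀ i ∈ s, ω i ∈ A i} = ∏ i ∈ s, ν (A i)

/-- A stationary probability measure for the Markov chain `X_{n+1} = f(X_n + ω_n)` on
`S¹ ≅ [0,1)`. -/
def IsStationaryChain (ψ : ℝ → ℝ) (L a ε : ℝ) (μ : Measure ℝ) : Prop :=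
  IsProbabilityMeasure μ ∧ μ (Ico (0:ℝ) 1) = 1 ∧
    ∀ A : Set ℝ, MeasurableSet A →
      μ A = ∫⁻ x, unif ε {w : ℝ | cmap ψ L a (x + w) ∈ A} ∂μ

/-- `μ` is supported on all of `S¹`. -/
def FullSupport (μ : Measure ℝ) : Prop :=
  ∀ U : Set ℝ, IsOpen U → (U ∩ Ico (0:ℝ) 1).Nonempty → 0 < μ U

/-- The neighborhood `B(η) = {x : d(x, C'_ψ) ≤ K₁⁻¹ L^η}` of the critical set. -/
def Bset (ψ : ℝ → ℝ) (K₁ L η : ℝ) : Set ℝ := {x : ℝ | dS1Set x (Crit ψ) ≤ K₁⁻¹ * L ^ η}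

/-- `G = S¹ ∖ B(-β)`. -/
def Gset (ψ : ℝ → ℝ) (K₁ L β : ℝ) : Set ℝ := (Bset ψ K₁ L (-β))ᶜ

/-- `B^l` for `0 ≤ l ≤ k` (`B⁰ = I`). -/
def BlSet (ψ : ℝ → ℝ) (K₁ L β : ℝ) (k l : ℕ) : Set ℝ :=
  if l = k then Bset ψ K₁ L (-(k : ℝ) / 2 - β)
  else Bset ψ K₁ L (-(l : ℝ) / 2 - β) \ Bset ψ K₁ L (-((l : ℝ) + 1) / 2 - β)

/-- The shifted set `A_w = A - w`. -/
def shiftSet (A : Set ℝ) (w : ℝ) : Set ℝ := {x : ℝ | x + w ∈ A}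
/-! ## The partition `R` into connected components of `G, B⁰, …, B^k`. -/

open scoped Classical in
/-- The element of `{G, B⁰, …, B^k}` containing `x`. -/
def pieceOf (ψ : ℝ → ℝ) (K₁ L β : ℝ) (k : ℕ) (x : ℝ) : Set ℝ :=
  if x ∈ Gset ψ K₁ L β then Gset ψ K₁ L β
  else if h : ∃ l : ℕ, l ≤ k ∧ x ∈ BlSet ψ K₁ L β k l then BlSet ψ K₁ L β k h.choose
  else ∅

/-- The atom of the partition `R` containing `x`: the connected component of the piece of
`{G, B⁰, …, B^k}` containing `x`. -/
def atomR (ψ : ℝ → ℝ) (K₁ L β : ℝ) (k : ℕ) (x : ℝ) : Set ℝ :=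
  connectedComponentIn (pieceOf ψ K₁ L β k x) x

/-- Length of a subset of `ℝ`. -/
def sLen (S : Set ℝ) : ℝ := (volume S).toReal

/-- The atom of the shifted partition `R_w` containing `z`. -/
def atomRshift (ψ : ℝ → ℝ) (K₁ L β : ℝ) (k : ℕ) (w z : ℝ) : Set ℝ :=
  {t : ℝ | t + w ∈ atomR ψ K₁ L β k (z + w)}

/-- `J` is a longest atom of `R_w` restricted to `Jbar`. -/
def IsLongestAtom (ψ : ℝ → ℝ) (K₁ L β : ℝ) (k : ℕ) (w : ℝ) (Jbar J : Set ℝ) : Prop :=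
  (∃ z ∈ Jbar, J = atomRshift ψ K₁ L β k w z ∩ Jbar) ∧
    ∀ z ∈ Jbar, sLen (atomRshift ψ K₁ L β k w z ∩ Jbar) ≤ sLen J

/-- The random interval process `(J_i, J̄_i)` of Section 3.2:
`J₀ = X₀ + [-ε,ε]`, `J̄₁ = f̃(J₀)`, and for `i ≥ 1`, `J_i` is a longest atom of `R_{ω_i}|_{J̄_i}`
and `J̄_{i+1} = f̃_{ω_i}(J_i)`. -/
def IntervalProc (ψ : ℝ → ℝ) (L a K₁ β ε : ℝ) (k : ℕ) (X₀ : ℝ) (ω : ℕ → ℝ)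
    (J Jbar : ℕ → Set ℝ) : Prop :=
  J 0 = Icc (X₀ - ε) (X₀ + ε) ∧
    Jbar 1 = (fun x : ℝ => L * ψ x + a) '' J 0 ∧
    ∀ i : ℕ, 1 ≤ i →
      IsLongestAtom ψ K₁ L β k (ω i) (Jbar i) (J i) ∧
        Jbar (i + 1) = (fun x : ℝ => L * ψ (x + ω i) + a) '' J i

/-! ## The partition `𝒫` of Section 4.1 and the merged partitions `𝒫_ω(I)`. -/

/-- A partition `𝒫` of `S¹` (regarded 1-periodically on `ℝ`) as in Section 4.1(A):
atoms are intervals subordinate to `{G, B⁰, …, B^k}`; on `G` and `B^k` the atoms are the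
connected components, and each component of `B^l` (`l < k`) is divided into intervals of
length in `[(l+1)⁻² L^{-(l+3)/2-β}, 2(l+1)⁻² L^{-(l+3)/2-β}]`. -/
structure GoodPartition (ψ : ℝ → ℝ) (K₁ L β : ℝ) (k : ℕ) (PP : Set (Set ℝ)) : Prop where
  nonempty : ∀ C ∈ PP, C.Nonempty
  interval : ∀ C ∈ PP, C.OrdConnected
  disj : PP.PairwiseDisjoint id
  cover : ⋃₀ PP = univ
  periodic : ∀ C ∈ PP, (fun x : ℝ => x + 1) '' C ∈ PP
  subordinate : ∀ C ∈ PP, C ⊆ Gset ψ K₁ L β ∨ ∃ l ≤ k, C ⊆ BlSet ψ K₁ L β k l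
  g_atoms : ∀ C ∈ PP, C ⊆ Gset ψ K₁ L β → ∀ x ∈ C,
    C = connectedComponentIn (Gset ψ K₁ L β) x
  bk_atoms : ∀ C ∈ PP, C ⊆ BlSet ψ K₁ L β k k → ∀ x ∈ C,
    C = connectedComponentIn (BlSet ψ K₁ L β k k) x
  bl_len : ∀ C ∈ PP, ∀ l : ℕ, l < k → C ⊆ BlSet ψ K₁ L β k l →
    (((l : ℝ) + 1) ^ 2)⁻¹ * L ^ (-((l : ℝ) + 3) / 2 - β) ≤ sLen C ∧
      sLen C ≤ 2 * (((l : ℝ) + 1) ^ 2)⁻¹ * L ^ (-((l : ℝ) + 3) / 2 - β)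

/-- The non-singleton atoms of the shifted partition `𝒫_w` restricted to `I`. -/
def restAtoms (PP : Set (Set ℝ)) (w : ℝ) (I : Set ℝ) : Set (Set ℝ) :=
  {A : Set ℝ | (∃ C ∈ PP, A = ((fun x : ℝ => x - w) '' C) ∩ I) ∧ A.Nontrivial}

/-- `A` lies (weakly) to the left of `B`. -/
def setBefore (A B : Set ℝ) : Prop := ∀ a ∈ A, ∀ b ∈ B, a ≤ b

/-- `A` is one of the two leftmost members of `𝒜`. -/
def TwoLeft (𝒜 : Set (Set ℝ)) (A : Set ℝ) : Prop :=
  A ∈ 𝒜 ∧ {B ∈ 𝒜 | B ≠ A ∧ setBefore B A}.Subsingleton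

/-- `A` is one of the two rightmost members of `𝒜`. -/
def TwoRight (𝒜 : Set (Set ℝ)) (A : Set ℝ) : Prop :=
  A ∈ 𝒜 ∧ {B ∈ 𝒜 | B ≠ A ∧ setBefore A B}.Subsingleton

/-- `𝒜` has at least four members. -/
def AtLeastFour (𝒜 : Set (Set ℝ)) : Prop :=
  ∃ s : Finset (Set ℝ), ↑s ⊆ 𝒜 ∧ s.card = 4

/-- `S` is an atom of the merged partition `𝒫_w(I)` (whose atoms `𝒜 = restAtoms PP w I`
are merged at the two ends, and which is trivial if `N ≤ 3`). -/
def MergedAtom (𝒜 : Set (Set ℝ)) (I S : Set ℝ) : Prop :=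
  (¬ AtLeastFour 𝒜 ∧ S = I) ∨
    (AtLeastFour 𝒜 ∧
      ((∃ A B : Set ℝ, A ∈ 𝒜 ∧ B ∈ 𝒜 ∧ A ≠ B ∧ TwoLeft 𝒜 A ∧ TwoLeft 𝒜 B ∧ S = A ∪ B) ∨
        (∃ A B : Set ℝ, A ∈ 𝒜 ∧ B ∈ 𝒜 ∧ A ≠ B ∧ TwoRight 𝒜 A ∧ TwoRight 𝒜 B ∧ S = A ∪ B) ∨
        (S ∈ 𝒜 ∧ ¬ TwoLeft 𝒜 S ∧ ¬ TwoRight 𝒜 S)))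

/-! ## Itineraries (Section 4.1(B),(C)). -/

/-- The image `f̃ʲ_ω(A)`. -/
def Fim (ψ : ℝ → ℝ) (L a : ℝ) (ω : ℕ → ℝ) (j : ℕ) (A : Set ℝ) : Set ℝ :=
  (fun x : ℝ => liftOrbit ψ L a ω x j) '' A

/-- `C 0 ⊇ C 1 ⊇ ⋯ ⊇ C n` is a chain of itinerary atoms: `C i ∈ 𝒬_i` for `i ≤ n`. -/
def AtomChain (ψ : ℝ → ℝ) (L a : ℝ) (PP : Set (Set ℝ)) (ω : ℕ → ℝ) (I : Set ℝ)
    (n : ℕ) (C : ℕ → Set ℝ) : Prop :=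
  MergedAtom (restAtoms PP (ω 0) I) I (C 0) ∧
    ∀ i : ℕ, i < n →
      ∃ S : Set ℝ,
        MergedAtom (restAtoms PP (ω (i + 1)) (Fim ψ L a ω (i + 1) (C i)))
            (Fim ψ L a ω (i + 1) (C i)) S ∧
          C (i + 1) = C i ∩ (fun x : ℝ => liftOrbit ψ L a ω x (i + 1)) ⁻¹' S

/-- `τ ≥ n` on the chain `C`: no near-visit to `B^k` before time `n`. -/
def ChainTauGE (ψ : ℝ → ℝ) (K₁ L a β : ℝ) (k : ℕ) (ω : ℕ → ℝ) (C : ℕ → Set ℝ)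
    (n : ℕ) : Prop :=
  ∀ i : ℕ, i < n → Fim ψ L a ω i (C i) ∩ shiftSet (BlSet ψ K₁ L β k k) (ω i) = ∅

/-- The chain `C` is bound at time `t`: `t ∈ [t_j + 1, t_j + p_j]` for some bound period. -/
def ChainBoundAt (ψ : ℝ → ℝ) (K₁ L a β : ℝ) (k : ℕ) (ω : ℕ → ℝ) (C : ℕ → Set ℝ)
    (t : ℕ) : Prop :=
  ∃ s : ℕ, s < t ∧ ∃ l : ℕ, 1 ≤ l ∧ l ≤ k ∧
    (Fim ψ L a ω s (C s) ∩ shiftSet (BlSet ψ K₁ L β k l) (ω s)).Nonempty ∧ t ≤ s + l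

/-! ## The supporting interval process `(I_n)` of Section 5.1. -/

open scoped Classical in
/-- The shift used when mapping `I_n` forward: `0` if `I_n` is a fresh noise interval
(`n = 0` or `n - 1` was a near-visit to `B^k`), and `ω_n` otherwise. -/
def stepShift (ψ : ℝ → ℝ) (K₁ L β : ℝ) (k : ℕ) (ω : ℕ → ℝ) (I : ℕ → Set ℝ) : ℕ → ℝ
  | 0 => 0
  | n + 1 =>
    if (I n ∩ shiftSet (BlSet ψ K₁ L β k k) (ω n)).Nonempty then 0 else ω (n + 1)

/-- The supporting interval process `(I_n)` of Section 5.1: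
`I₀ = X̃₀ + [-ε,ε]`; if `I_n` meets `B^k_{ω_n}` then `I_{n+1} = X̃_{n+1} + [-ε,ε]`, and
otherwise `I_{n+1}` is the atom of `𝒫_{ω_{n+1}}(f̃_{(·)}(I_n))` containing `X̃_{n+1}`. -/
def SuppProc (ψ : ℝ → ℝ) (L a K₁ β ε : ℝ) (k : ℕ) (PP : Set (Set ℝ)) (X₀ : ℝ)
    (ω : ℕ → ℝ) (I : ℕ → Set ℝ) : Prop :=
  I 0 = Icc (X₀ - ε) (X₀ + ε) ∧
    ∀ n : ℕ,
      ((I n ∩ shiftSet (BlSet ψ K₁ L β k k) (ω n)).Nonempty →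
          I (n + 1) =
            Icc (liftOrbit ψ L a ω X₀ (n + 1) - ε) (liftOrbit ψ L a ω X₀ (n + 1) + ε)) ∧
      (¬ (I n ∩ shiftSet (BlSet ψ K₁ L β k k) (ω n)).Nonempty →
          MergedAtom
              (restAtoms PP (ω (n + 1))
                ((fun x : ℝ => L * ψ (x + stepShift ψ K₁ L β k ω I n) + a) '' I n))
              ((fun x : ℝ => L * ψ (x + stepShift ψ K₁ L β k ω I n) + a) '' I n)
              (I (n + 1)) ∧
            liftOrbit ψ L a ω X₀ (n + 1) ∈ I (n + 1))

/-- `τ_j = m` for the supporting interval process: `I_m` meets `B^k_{ω_m}`, `m ≥ 1`, and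
exactly `j - 1` earlier positive times do so. -/
def TauEq (ψ : ℝ → ℝ) (K₁ L β : ℝ) (k : ℕ) (ω : ℕ → ℝ) (I : ℕ → Set ℝ)
    (j m : ℕ) : Prop :=
  0 < m ∧ (I m ∩ shiftSet (BlSet ψ K₁ L β k k) (ω m)).Nonempty ∧
    ∃ s : Finset ℕ,
      (∀ i : ℕ, i ∈ s ↔
        (0 < i ∧ i < m ∧ (I i ∩ shiftSet (BlSet ψ K₁ L β k k) (ω i)).Nonempty)) ∧
      s.card = j - 1

/-! A point of `B^l` lies within `K₁⁻¹ L^{-l/2-β}` of a critical point `x̂`. As `ψ'(x̂) = 0`,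
one step of `f` maps it within `L · L^{-l-2β}` of `f(x̂)`; every later step expands distances by
at most `L/10` and the noise adds at most `ε`. So for `l` steps the noisy orbit stays within
`O(L^{-β})` of the postcritical orbit, which (H3) keeps `c`-far from the critical set: the orbit
lies in `G`, where `|f'| ≥ K₁ L d(·, C'_ψ) ≥ L^{1-β}`. Outside `B(-(l+1)/2-β)` the same bound
on `|ψ'|` gives (iii). -/

lemma dS1_eq_dist (x y : ℝ) : dS1 x y = dist (x : UnitAddCircle) (y : UnitAddCircle) := by
  rw [dist_eq_norm, ← AddCircle.coe_sub, UnitAddCircle.norm_eq, dS1]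

lemma dS1_nonneg (x y : ℝ) : 0 ≤ dS1 x y := abs_nonneg _

lemma dS1_comm (x y : ℝ) : dS1 x y = dS1 y x := by
  simp only [dS1_eq_dist, dist_comm]

lemma dS1_triangle (x y z : ℝ) : dS1 x z ≤ dS1 x y + dS1 y z := by
  simp only [dS1_eq_dist, dist_triangle]

lemma dS1_le_abs_sub (x y : ℝ) : dS1 x y ≤ |x - y| := by
  rw [dS1_eq_dist, dist_eq_norm, ← AddCircle.coe_sub]
  exact QuotientAddGroup.norm_mk_le_norm

lemma dS1_fract_left (x y : ℝ) : dS1 (Int.fract x) y = dS1 x y := by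
  simp only [dS1_eq_dist, AddCircle.coe_fract]

lemma dS1_fract_right (x y : ℝ) : dS1 x (Int.fract y) = dS1 x y := by
  simp only [dS1_eq_dist, AddCircle.coe_fract]

lemma dS1_add_left_le (x y w : ℝ) : dS1 (x + w) y ≤ dS1 x y + |w| := by
  calc dS1 (x + w) y ≤ dS1 (x + w) x + dS1 x y := dS1_triangle _ _ _
    _ ≤ |w| + dS1 x y := by grw [dS1_le_abs_sub, add_sub_cancel_left]
    _ = dS1 x y + |w| := add_comm _ _

lemma exists_intCast_dS1_eq (x y : ℝ) : ∃ m : ℤ, dS1 x y = |(x - m) - y| :=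
  ⟨round (x - y), by rw [dS1, sub_right_comm]⟩

lemma dS1Set_le_dS1 {A : Set ℝ} (x : ℝ) {w : ℝ} (hw : w ∈ A) : dS1Set x A ≤ dS1 x w :=
  csInf_le ⟨0, by rintro _ ⟨y, _, rfl⟩; exact dS1_nonneg _ _⟩ (mem_image_of_mem _ hw)

lemma dS1Set_le_dS1_add {A : Set ℝ} (hA : A.Nonempty) (u v : ℝ) :
    dS1Set v A ≤ dS1 v u + dS1Set u A := by
  rw [← sub_le_iff_le_add']
  refine le_csInf (hA.image _) ?_
  rintro _ ⟨w, hw, rfl⟩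
  linarith [dS1Set_le_dS1 v hw, dS1_triangle v u w]

lemma exists_dS1Set_eq {A : Set ℝ} (hA : ∀ y ∈ A, Int.fract y ∈ A)
    (hfin : (A ∩ Ico 0 1).Finite) (hne : A.Nonempty) (x : ℝ) :
    ∃ w ∈ A, dS1Set x A = dS1 x w := by
  have hrep : ∀ y ∈ A, Int.fract y ∈ A ∩ Ico 0 1 :=
    fun y hy => ⟨hA y hy, Int.fract_nonneg y, Int.fract_lt_one y⟩
  have hImage : dS1 x '' A = dS1 x '' (A ∩ Ico 0 1) := by
    refine (image_mono inter_subset_left).antisymm' ?_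
    rintro _ ⟨y, hy, rfl⟩
    exact ⟨Int.fract y, hrep y hy, dS1_fract_right x y⟩
  obtain ⟨y, hy⟩ := hne
  have hne' : (dS1 x '' (A ∩ Ico 0 1)).Nonempty := ⟨_, mem_image_of_mem _ (hrep y hy)⟩
  obtain ⟨w, hw, hmin⟩ := hne'.csInf_mem (hfin.image (dS1 x))
  exact ⟨w, hw.1, by rw [dS1Set, hImage, hmin]⟩

lemma abs_sub_le_mul_of_abs_deriv_le {g : ℝ → ℝ} {C : ℝ} (hg : Differentiable ℝ g)
    (hC : ∀ t, |deriv g t| ≤ C) (y z : ℝ) : |g y - g z| ≤ C * |y - z| := by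
  simpa only [Real.norm_eq_abs] using Convex.norm_image_sub_le_of_norm_deriv_le
    (fun t _ => hg t) (fun t _ => hC t) convex_univ (mem_univ z) (mem_univ y)

lemma abs_sub_le_mul_sq_of_deriv_eq_zero {g : ℝ → ℝ} {C : ℝ} (hg : Differentiable ℝ g)
    (hg' : Differentiable ℝ (deriv g)) (hC : ∀ t, |deriv (deriv g) t| ≤ C) {xh : ℝ}
    (hxh : deriv g xh = 0) (y : ℝ) : |g y - g xh| ≤ C * |y - xh| ^ 2 := by
  have hderiv : ∀ t ∈ uIcc xh y, ‖deriv g t‖ ≤ C * |y - xh| := fun t ht => by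
    have h := abs_sub_le_mul_of_abs_deriv_le hg' hC t xh
    rw [hxh, sub_zero] at h
    have hC0 : 0 ≤ C := (abs_nonneg _).trans (hC 0)
    rw [Real.norm_eq_abs]
    exact h.trans (mul_le_mul_of_nonneg_left (abs_sub_left_of_mem_uIcc ht) hC0)
  have := Convex.norm_image_sub_le_of_norm_deriv_le (fun t _ => hg t) hderiv
    (convex_uIcc xh y) left_mem_uIcc right_mem_uIcc
  simpa only [Real.norm_eq_abs, sq, mul_assoc] using this

section Circle

variable {ψ : ℝ → ℝ}

lemma Function.Periodic.deriv {c : ℝ} (hper : Function.Periodic ψ c) :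
    Function.Periodic (deriv ψ) c := fun y => by
  rw [← deriv_comp_add_const, show (fun x => ψ (x + c)) = ψ from funext hper]

lemma fract_mem_crit (hper : Function.Periodic ψ 1) {y : ℝ} (hy : y ∈ Crit ψ) :
    Int.fract y ∈ Crit ψ := by
  have h := hper.deriv.sub_int_mul_eq (x := y) ⌊y⌋
  rw [mul_one, Int.self_sub_floor] at h
  exact h.trans hy

lemma crit_nonempty (hper : Function.Periodic ψ 1) (hψ : Differentiable ℝ ψ) :
    (Crit ψ).Nonempty := by
  obtain ⟨x, -, hx⟩ := exists_deriv_eq_zero zero_lt_one hψ.continuous.continuousOn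
    (by simpa using (hper 0).symm)
  exact ⟨x, hx⟩

lemma exists_crit_dS1Set_eq (hper : Function.Periodic ψ 1) (hψ : Differentiable ℝ ψ)
    (hH1 : H1 ψ) (x : ℝ) : ∃ xh ∈ Crit ψ, dS1Set x (Crit ψ) = dS1 x xh :=
  exists_dS1Set_eq (fun _ => fract_mem_crit hper) hH1 (crit_nonempty hper hψ) x

lemma abs_sub_le_mul_dS1 (hper : Function.Periodic ψ 1) (hψ : Differentiable ℝ ψ) {C : ℝ}
    (hC : ∀ t, |deriv ψ t| ≤ C) (y z : ℝ) : |ψ y - ψ z| ≤ C * dS1 y z := by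
  obtain ⟨m, hm⟩ := exists_intCast_dS1_eq y z
  rw [hm, ← hper.sub_int_mul_eq (x := y) m, mul_one]
  exact abs_sub_le_mul_of_abs_deriv_le hψ hC _ _

lemma abs_sub_le_mul_dS1_sq (hper : Function.Periodic ψ 1) (hψ : Differentiable ℝ ψ)
    (hψ' : Differentiable ℝ (deriv ψ)) {C : ℝ} (hC : ∀ t, |deriv (deriv ψ) t| ≤ C) {xh : ℝ}
    (hxh : xh ∈ Crit ψ) (y : ℝ) : |ψ y - ψ xh| ≤ C * dS1 y xh ^ 2 := by
  obtain ⟨m, hm⟩ := exists_intCast_dS1_eq y xh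
  rw [hm, ← hper.sub_int_mul_eq (x := y) m, mul_one]
  exact abs_sub_le_mul_sq_of_deriv_eq_zero hψ hψ' hC hxh _

lemma dS1_cmap_le (L a y z : ℝ) :
    dS1 (cmap ψ L a y) (cmap ψ L a z) ≤ |L| * |ψ y - ψ z| := by
  rw [cmap, cmap, dS1_fract_left, dS1_fract_right, ← abs_mul]
  exact (dS1_le_abs_sub _ _).trans_eq (by ring_nf)

end Circle

lemma add_two_mul_le_pow_mul {u : ℕ → ℝ} {q ε : ℝ} (hq : 2 ≤ q) (hε : 0 ≤ ε)
    (hu : ∀ j, u (j + 1) ≤ q * (u j + ε)) (j : ℕ) : u j + 2 * ε ≤ q ^ j * (u 0 + 2 * ε) := by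
  induction j with
  | zero => simp
  | succ j ih =>
    calc u (j + 1) + 2 * ε ≤ q * (u j + 2 * ε) := by nlinarith [hu j]
      _ ≤ q * (q ^ j * (u 0 + 2 * ε)) := by gcongr
      _ = q ^ (j + 1) * (u 0 + 2 * ε) := by ring

section Orbit

variable {ψ : ℝ → ℝ} {L a : ℝ}

lemma orbitW_shift (ω : ℕ → ℝ) (x : ℝ) (i : ℕ) :
    orbitW ψ L a (fun n => ω (n + 1)) (cmap ψ L a (x + ω 0)) i = orbitW ψ L a ω x (i + 1) := by
  induction i with
  | zero => rfl
  | succ i ih => simp only [orbitW, ih]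

lemma derivAbs_succ (ω : ℕ → ℝ) (x : ℝ) (n : ℕ) :
    derivAbs ψ L a ω x (n + 1) =
      derivAbs ψ L a (fun n => ω (n + 1)) (cmap ψ L a (x + ω 0)) n * |L * deriv ψ (x + ω 0)| := by
  simp only [derivAbs, Finset.prod_range_succ', orbitW_shift]
  rfl

lemma pow_le_derivAbs {ω : ℕ → ℝ} {x m : ℝ} {n : ℕ}
    (hm : ∀ i < n, m ≤ |L * deriv ψ (orbitW ψ L a ω x i + ω i)|) (hm0 : 0 ≤ m) :
    m ^ n ≤ derivAbs ψ L a ω x n := by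
  calc m ^ n = ∏ _i ∈ Finset.range n, m := by simp
    _ ≤ derivAbs ψ L a ω x n :=
      Finset.prod_le_prod (fun _ _ => hm0) (fun i hi => hm i (Finset.mem_range.1 hi))

lemma dS1_cmap_add_le (hper : Function.Periodic ψ 1) (hψ : Differentiable ℝ ψ)
    (hH4 : H4 ψ) (hL : 0 ≤ L) (y z w : ℝ) :
    dS1 (cmap ψ L a (y + w)) (cmap ψ L a z) ≤ L / 10 * (dS1 y z + |w|) := by
  calc dS1 (cmap ψ L a (y + w)) (cmap ψ L a z) ≤ |L| * |ψ (y + w) - ψ z| := dS1_cmap_le L a _ _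
    _ ≤ L * (1 / 10 * dS1 (y + w) z) := by
      rw [abs_of_nonneg hL]; gcongr; exact abs_sub_le_mul_dS1 hper hψ hH4.1 _ _
    _ = L / 10 * dS1 (y + w) z := by ring
    _ ≤ L / 10 * (dS1 y z + |w|) := by grw [dS1_add_left_le]

lemma dS1_cmap_le_sq_of_mem_crit (hper : Function.Periodic ψ 1) (hC2 : ContDiff ℝ 2 ψ)
    (hH4 : H4 ψ) (hL : 0 ≤ L) {xh : ℝ} (hxh : xh ∈ Crit ψ) (y : ℝ) :
    dS1 (cmap ψ L a y) (cmap ψ L a xh) ≤ L / 10 * dS1 y xh ^ 2 := by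
  calc dS1 (cmap ψ L a y) (cmap ψ L a xh) ≤ |L| * |ψ y - ψ xh| := dS1_cmap_le L a _ _
    _ ≤ L * (1 / 10 * dS1 y xh ^ 2) := by
      rw [abs_of_nonneg hL]
      gcongr
      exact abs_sub_le_mul_dS1_sq hper (hC2.differentiable (by norm_num))
        hC2.differentiable_deriv_two hH4.2 hxh _
    _ = L / 10 * dS1 y xh ^ 2 := by ring

/-- A noisy orbit starting next to a critical point `xh` shadows the critical orbit: the
first step is quadratic in the initial distance, the later ones expand distances by at most
`L / 10` and add the noise. -/
lemma dS1_orbitW_detIter_le (hper : Function.Periodic ψ 1) (hC2 : ContDiff ℝ 2 ψ)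
    (hH4 : H4 ψ) (hL : 20 ≤ L) {ω : ℕ → ℝ} {ε : ℝ} (hω : ∀ i, |ω i| ≤ ε) {xh : ℝ}
    (hxh : xh ∈ Crit ψ) (x : ℝ) (j : ℕ) :
    dS1 (orbitW ψ L a ω x (j + 1)) (detIter ψ L a xh (j + 1)) + 2 * ε ≤
      (L / 10) ^ j * (L / 10 * dS1 (x + ω 0) xh ^ 2 + 2 * ε) := by
  set D : ℕ → ℝ := fun n => dS1 (orbitW ψ L a ω x n) (detIter ψ L a xh n)
  have hfirst : D 1 ≤ L / 10 * dS1 (x + ω 0) xh ^ 2 := by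
    simpa only [D, orbitW, detIter, add_zero] using
      dS1_cmap_le_sq_of_mem_crit (a := a) hper hC2 hH4 (by linarith) hxh (x + ω 0)
  have hstep : ∀ n, D (n + 1 + 1) ≤ L / 10 * (D (n + 1) + ε) := fun n => by
    have h := dS1_cmap_add_le (L := L) (a := a) hper (hC2.differentiable (by norm_num)) hH4
      (by linarith) (orbitW ψ L a ω x (n + 1)) (detIter ψ L a xh (n + 1)) (ω (n + 1))
    grw [hω] at h
    simpa only [D, orbitW, detIter, add_zero] using h
  grw [add_two_mul_le_pow_mul (u := fun n => D (n + 1)) (by linarith)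
    ((abs_nonneg _).trans (hω 0)) hstep j, hfirst]

end Orbit

lemma rpow_sub_one_mul_le {L K r ε l β : ℝ} (hL : 1 ≤ L) (hβ : 0 ≤ β) (hr0 : 0 ≤ r)
    (hr : r ≤ K * L ^ (-l / 2 - β)) (hε : ε ≤ L ^ (-(l - 1) - β)) :
    L ^ (l - 1) * (L * r ^ 2 + 2 * ε) ≤ (K ^ 2 + 2) * L ^ (-β) := by
  have hL0 : 0 < L := by linarith
  have hquad : L ^ (l - 1) * L * L ^ (-l / 2 - β) * L ^ (-l / 2 - β) = L ^ (-β) * L ^ (-β) := by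
    rw [← Real.rpow_add_one hL0.ne', ← Real.rpow_add hL0, ← Real.rpow_add hL0,
      ← Real.rpow_add hL0]
    ring_nf
  have hlin : L ^ (l - 1) * L ^ (-(l - 1) - β) = L ^ (-β) := by
    rw [← Real.rpow_add hL0]
    ring_nf
  have hsmall : L ^ (-β) ≤ 1 := Real.rpow_le_one_of_one_le_of_nonpos hL (by linarith)
  calc L ^ (l - 1) * (L * r ^ 2 + 2 * ε)
      ≤ L ^ (l - 1) * (L * (K * L ^ (-l / 2 - β)) ^ 2 + 2 * L ^ (-(l - 1) - β)) := by
        gcongr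
    _ = K ^ 2 * (L ^ (-β) * L ^ (-β)) + 2 * L ^ (-β) := by rw [← hquad, ← hlin]; ring
    _ ≤ K ^ 2 * (L ^ (-β) * 1) + 2 * L ^ (-β) := by gcongr
    _ = (K ^ 2 + 2) * L ^ (-β) := by ring

lemma eventually_mul_rpow_neg_le {β δ : ℝ} (hβ : 0 < β) (hδ : 0 < δ) (C : ℝ) :
    ∀ᶠ L in atTop, C * L ^ (-β) ≤ δ := by
  have h := (tendsto_rpow_neg_atTop hβ).const_mul C
  rw [mul_zero] at h
  exact h.eventually (eventually_le_nhds hδ)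

section Expansion

variable {ψ : ℝ → ℝ} {K₁ L a β c ε : ℝ} {ω : ℕ → ℝ}

lemma mem_Gset_iff {x : ℝ} : x ∈ Gset ψ K₁ L β ↔ K₁⁻¹ * L ^ (-β) < dS1Set x (Crit ψ) := by
  simp [Gset, Bset]

lemma dS1Set_le_of_mem_BlSet {k l : ℕ} {x : ℝ} (hx : x ∈ BlSet ψ K₁ L β k l) :
    dS1Set x (Crit ψ) ≤ K₁⁻¹ * L ^ (-(l : ℝ) / 2 - β) := by
  unfold BlSet at hx
  split_ifs at hx with h
  · subst h; exact hx
  · exact hx.1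

lemma lt_dS1Set_of_mem_BlSet {k l : ℕ} (hlk : l ≠ k) {x : ℝ} (hx : x ∈ BlSet ψ K₁ L β k l) :
    K₁⁻¹ * L ^ (-((l : ℝ) + 1) / 2 - β) < dS1Set x (Crit ψ) := by
  simp only [BlSet, if_neg hlk, Bset] at hx
  exact not_le.1 hx.2

lemma rpow_le_abs_mul_deriv (hK : K1hyp ψ K₁) (hL : 0 < L) {η y : ℝ}
    (hy : K₁⁻¹ * L ^ η ≤ dS1Set y (Crit ψ)) : L ^ (1 + η) ≤ |L * deriv ψ y| := by
  calc L ^ (1 + η) = L * (K₁ * (K₁⁻¹ * L ^ η)) := by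
        rw [Real.rpow_add hL, Real.rpow_one, mul_inv_cancel_left₀ hK.1.ne']
    _ ≤ L * |deriv ψ y| := by grw [hy, hK.2 y]; exact hK.1.le
    _ = |L * deriv ψ y| := by rw [abs_mul, abs_of_pos hL]

lemma half_le_dS1Set_orbitW (hper : Function.Periodic ψ 1) (hC2 : ContDiff ℝ 2 ψ)
    (hH4 : H4 ψ) (hL : 20 ≤ L) (hβ : 0 ≤ β) {K : ℝ} (hLc : (K ^ 2 + 2) * L ^ (-β) ≤ c / 2)
    (hω : ∀ i, |ω i| ≤ ε) {l : ℕ} (hε : ε ≤ L ^ (-((l : ℝ) - 1) - β)) {x xh : ℝ}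
    (hxh : xh ∈ Crit ψ) (hx : dS1 (x + ω 0) xh ≤ K * L ^ (-(l : ℝ) / 2 - β))
    (hH3 : ∀ i, 1 ≤ i → i ≤ l → c ≤ dS1Set (detIter ψ L a xh i) (Crit ψ)) {i : ℕ}
    (hi : 1 ≤ i) (hil : i ≤ l) : c / 2 ≤ dS1Set (orbitW ψ L a ω x i) (Crit ψ) := by
  obtain ⟨j, rfl⟩ : ∃ j, i = j + 1 := ⟨i - 1, by omega⟩
  have hε0 : 0 ≤ ε := (abs_nonneg _).trans (hω 0)
  have hj : (j : ℝ) ≤ l - 1 := by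
    have : ((j + 1 : ℕ) : ℝ) ≤ l := by exact_mod_cast hil
    push_cast at this
    linarith
  have hpow : (L / 10) ^ j ≤ L ^ ((l : ℝ) - 1) :=
    calc (L / 10) ^ j ≤ L ^ j := by gcongr; linarith
      _ = L ^ (j : ℝ) := (Real.rpow_natCast L j).symm
      _ ≤ L ^ ((l : ℝ) - 1) := Real.rpow_le_rpow_of_exponent_le (by linarith) hj
  have hshadow : dS1 (orbitW ψ L a ω x (j + 1)) (detIter ψ L a xh (j + 1)) ≤ c / 2 :=
    calc _ ≤ (L / 10) ^ j * (L / 10 * dS1 (x + ω 0) xh ^ 2 + 2 * ε) - 2 * ε := by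
          linarith [dS1_orbitW_detIter_le (a := a) hper hC2 hH4 hL hω hxh x j]
      _ ≤ L ^ ((l : ℝ) - 1) * (L * dS1 (x + ω 0) xh ^ 2 + 2 * ε) := by
          have : L / 10 * dS1 (x + ω 0) xh ^ 2 ≤ L * dS1 (x + ω 0) xh ^ 2 := by
            gcongr; linarith
          grw [hpow, this]; linarith
      _ ≤ (K ^ 2 + 2) * L ^ (-β) :=
          rpow_sub_one_mul_le (by linarith) hβ (dS1_nonneg _ _) hx hε
      _ ≤ c / 2 := hLc
  have := dS1Set_le_dS1_add ⟨xh, hxh⟩ (orbitW ψ L a ω x (j + 1)) (detIter ψ L a xh (j + 1))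
  rw [dS1_comm] at this
  linarith [hH3 (j + 1) hi hil]

/-- An orbit entering `B^l` shadows a critical orbit for `l` steps, so it stays in `G`, where
`|f'| ≥ L^{1-β}`. -/
lemma orbitW_mem_Gset_and_rpow_le_derivAbs (hper : Function.Periodic ψ 1)
    (hC2 : ContDiff ℝ 2 ψ) (hH1 : H1 ψ) (hH4 : H4 ψ) (hK : K1hyp ψ K₁) (hβ : 0 ≤ β)
    (hc : 0 < c) (hL : 20 ≤ L) (hLc : (K₁⁻¹ ^ 2 + 2) * L ^ (-β) ≤ c / 2)
    (hLK : K₁⁻¹ * L ^ (-β) ≤ c / 4) {k : ℕ} (hH3 : H3cond ψ L a c k) (hω : ∀ i, |ω i| ≤ ε)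
    {l : ℕ} (hl : 1 ≤ l) (hlk : l ≤ k) (hε : ε ≤ L ^ (-((l : ℝ) - 1) - β)) {x : ℝ}
    (hx : x + ω 0 ∈ BlSet ψ K₁ L β k l) :
    (∀ i, 1 ≤ i → i ≤ l → orbitW ψ L a ω x i ∈ Gset ψ K₁ L β) ∧
      L ^ ((l : ℝ) * (1 - β)) ≤
        derivAbs ψ L a (fun n => ω (n + 1)) (cmap ψ L a (x + ω 0)) l := by
  have hL0 : 0 < L := by linarith
  obtain ⟨xh, hxh, hdist⟩ :=
    exists_crit_dS1Set_eq hper (hC2.differentiable (by norm_num)) hH1 (x + ω 0)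
  have hfar : ∀ {i}, 1 ≤ i → i ≤ l → c / 2 ≤ dS1Set (orbitW ψ L a ω x i) (Crit ψ) :=
    half_le_dS1Set_orbitW hper hC2 hH4 hL hβ hLc hω hε hxh
      (hdist ▸ dS1Set_le_of_mem_BlSet hx) fun i hi hil => hH3 xh hxh i hi (hil.trans hlk)
  have hεc : ε ≤ c / 4 := by
    have : L ^ (-((l : ℝ) - 1) - β) ≤ L ^ (-β) :=
      Real.rpow_le_rpow_of_exponent_le (by linarith)
        (by linarith [(Nat.one_le_cast (α := ℝ)).2 hl])
    nlinarith [sq_nonneg K₁⁻¹, Real.rpow_nonneg hL0.le (-β)]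
  refine ⟨fun i hi hil => mem_Gset_iff.2 (by linarith [hfar hi hil]), ?_⟩
  rw [mul_comm, Real.rpow_mul hL0.le, Real.rpow_natCast]
  refine pow_le_derivAbs (fun i hi => ?_) (Real.rpow_nonneg hL0.le _)
  rw [orbitW_shift, sub_eq_add_neg]
  refine rpow_le_abs_mul_deriv hK hL0 ?_
  have hnear := dS1Set_le_dS1_add ⟨xh, hxh⟩ (orbitW ψ L a ω x (i + 1) + ω (i + 1))
    (orbitW ψ L a ω x (i + 1))
  have hstep : dS1 (orbitW ψ L a ω x (i + 1)) (orbitW ψ L a ω x (i + 1) + ω (i + 1)) ≤ ε := by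
    grw [dS1_le_abs_sub, sub_add_cancel_left, abs_neg, hω]
  linarith [hfar (Nat.le_add_left 1 i) (by omega : i + 1 ≤ l)]

lemma rpow_le_abs_mul_deriv_of_mem_BlSet (hK : K1hyp ψ K₁) (hL : 0 < L) {k l : ℕ}
    (hlk : l < k) {y : ℝ} (hy : y ∈ BlSet ψ K₁ L β k l) :
    L ^ (1 - ((l : ℝ) + 1) / 2 - β) ≤ |L * deriv ψ y| := by
  rw [show 1 - ((l : ℝ) + 1) / 2 - β = 1 + (-((l : ℝ) + 1) / 2 - β) by ring]
  exact rpow_le_abs_mul_deriv hK hL (lt_dS1Set_of_mem_BlSet hlk.ne hy).le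

end Expansion

/-- The consequences of Lemma 2.2 under `(H3)_{c,k}` (Section 2.2).  There is
`L₀ = L₀(β,c,ψ)`, independent of `k`, such that for all `L ≥ L₀`: (i) the postcritical
iterates `f^i(xh)`, `1 ≤ i ≤ k`, lie in `G`; (ii) for `x ∈ B^l_{ω₀}`, `1 ≤ l ≤ k`, the
iterates `f^i_ω(x)` (`1 ≤ i ≤ l`) lie in `G` and `|(f^l_{θω})'(f_{ω₀}x)| ≥ L^{l(1-β)}`;
(iii) if moreover `l < k`, then `|f'_{ω₀}(x)| ≥ L^{1-(l+1)/2-β}` and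
`|(f^{l+1}_ω)'(x)| ≥ L^{(l+1)(1/2-β)}`. -/
theorem lemma_expansion (ψ : ℝ → ℝ) (hψ : PsiReg ψ) (hH4 : H4 ψ)
    (K₁ : ℝ) (hK1 : K1hyp ψ K₁) (β c : ℝ)
    (hβ : β ∈ Ioo (0:ℝ) (1 / 100)) (hc : c ∈ Ioo (0:ℝ) 1) :
    ∃ L₀ : ℝ, 0 < L₀ ∧ ∀ L : ℝ, L₀ ≤ L → ∀ a ∈ Ico (0:ℝ) 1, ∀ k : ℕ, 1 ≤ k →
      H3cond ψ L a c k →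
      ∀ ε : ℝ, 0 < ε → ε < L ^ (-(max ((k : ℝ) - 1) (1 / 2)) - β) →
        (∀ xh ∈ Crit ψ, ∀ i : ℕ, 1 ≤ i → i ≤ k → detIter ψ L a xh i ∈ Gset ψ K₁ L β) ∧
          ∀ ω : ℕ → ℝ, (∀ i, |ω i| ≤ ε) → ∀ l : ℕ, 1 ≤ l → l ≤ k →
            ∀ x : ℝ, x + ω 0 ∈ BlSet ψ K₁ L β k l →
              (∀ i : ℕ, 1 ≤ i → i ≤ l → orbitW ψ L a ω x i ∈ Gset ψ K₁ L β) ∧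
                L ^ ((l : ℝ) * (1 - β)) ≤
                  derivAbs ψ L a (fun n => ω (n + 1)) (cmap ψ L a (x + ω 0)) l ∧
                (l < k →
                  L ^ (1 - ((l : ℝ) + 1) / 2 - β) ≤ |L * deriv ψ (x + ω 0)| ∧
                    L ^ (((l : ℝ) + 1) * (1 / 2 - β)) ≤ derivAbs ψ L a ω x (l + 1)) := by
  obtain ⟨hper, hC2, hH1, -⟩ := hψ
  have hc0 : 0 < c := hc.1
  obtain ⟨L₀, hL₀⟩ := eventually_atTop.1 <| (eventually_ge_atTop 20).and <|
    (eventually_mul_rpow_neg_le hβ.1 (half_pos hc0) (K₁⁻¹ ^ 2 + 2)).and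
      (eventually_mul_rpow_neg_le hβ.1 (by positivity : 0 < c / 4) K₁⁻¹)
  refine ⟨max L₀ 1, by positivity, fun L hL a _ k _ hH3 ε _ hεL => ?_⟩
  obtain ⟨h20, hLc, hLK⟩ := hL₀ L (le_of_max_le_left hL)
  have hL0 : 0 < L := by linarith
  refine ⟨fun xh hxh i hi hik => mem_Gset_iff.2 (by linarith [hH3 xh hxh i hi hik]),
    fun ω hω l hl hlk x hx => ?_⟩
  have hε : ε ≤ L ^ (-((l : ℝ) - 1) - β) := hεL.le.trans <|
    Real.rpow_le_rpow_of_exponent_le (by linarith) <| by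
      linarith [le_max_left ((k : ℝ) - 1) (1 / 2), (Nat.cast_le (α := ℝ)).2 hlk]
  obtain ⟨hG, hexp⟩ := orbitW_mem_Gset_and_rpow_le_derivAbs hper hC2 hH1 hH4 hK1 hβ.1.le hc0
    h20 hLc hLK hH3 hω hl hlk hε hx
  refine ⟨hG, hexp, fun hlk' => ?_⟩
  have hfirst := rpow_le_abs_mul_deriv_of_mem_BlSet hK1 hL0 hlk' hx
  refine ⟨hfirst, ?_⟩
  rw [derivAbs_succ, show ((l : ℝ) + 1) * (1 / 2 - β) = l * (1 - β) + (1 - (l + 1) / 2 - β) by ring,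
    Real.rpow_add hL0]
  exact mul_le_mul hexp hfirst (by positivity) ((Real.rpow_nonneg hL0.le _).trans hexp)
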